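/- arXiv:1603.04892 — 3 statements merged into one kernel-verified Lean document; each statement's English description precedes it below -/
import Mathlib

section
/- There is an absolute constant C > 0 such that for every n ≥ 1 and every access sequence S = (s_1,…,s_m) ∈ {1,…,n}^m, the weighted balance bound and the static optimality bound agree up to constants: WB(S) ≤ C·(SO(S) + m) and SO(S) ≤ C·(WB(S) + m). -/
/-- Binary trees with natural-number keys. -/
inductive BTree : Type where
  | leaf : BTree
  | node : BTree → ℕ → BTree → BTree

namespace BTree

/-- The set of keys appearing in the tree. -/
def keys : BTree → Finset ℕ
  | leaf => ∅
  | node l x r => keys l ∪ {x} ∪ keys r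

/-- Binary search tree property: left keys smaller, right keys larger. -/
def IsSearchTree : BTree → Prop
  | leaf => True
  | node l x r => (∀ y ∈ keys l, y < x) ∧ (∀ y ∈ keys r, x < y) ∧
      IsSearchTree l ∧ IsSearchTree r

/-- Depth of the key `y` (number of edges from the root), via the search path. -/
def depth : BTree → ℕ → ℕ
  | leaf, _ => 0
  | node l x r, y =>
      if y = x then 0
      else if y < x then depth l y + 1
      else depth r y + 1

/-- `T` is a binary search tree on the key set `{1, …, n}`. -/
def IsBSTOn (T : BTree) (n : ℕ) : Prop :=
  T.IsSearchTree ∧ T.keys = Finset.Icc 1 n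

end BTree

/-- The weighted balance bound `WB(S)`:
infimum over positive weight functions of `∑_j log₂(W / w(s_j))`. -/
noncomputable def WB (n : ℕ) {m : ℕ} (S : Fin m → ℕ) : ℝ :=
  sInf {x : ℝ | ∃ w : ℕ → ℝ, (∀ i ∈ Finset.Icc 1 n, 0 < w i) ∧
    x = ∑ j, Real.logb 2 ((∑ i ∈ Finset.Icc 1 n, w i) / w (S j))}

/-- The static optimality bound `SO(S)`:
minimum over BSTs `T` on `{1,…,n}` of `∑_j d_T(s_j)`. -/
noncomputable def SO (n : ℕ) {m : ℕ} (S : Fin m → ℕ) : ℝ :=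
  sInf {x : ℝ | ∃ T : BTree, T.IsBSTOn n ∧ x = ∑ j, (BTree.depth T (S j) : ℝ)}

/-- The split point of a weight-balanced tree on `Icc a b`. -/
noncomputable def wsplit (w : ℕ → ℝ) (a b : ℕ) : ℕ :=
  min b (max a (sInf {r | a ≤ r ∧
    (∑ i ∈ Finset.Icc a b, w i) / 2 < ∑ i ∈ Finset.Icc a r, w i}))

lemma wsplit_ge (w : ℕ → ℝ) {a b : ℕ} (h : a ≤ b) : a ≤ wsplit w a b :=
  le_min h (le_max_left _ _)

lemma wsplit_le (w : ℕ → ℝ) (a b : ℕ) : wsplit w a b ≤ b := min_le_left _ _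

/-- A weight-balanced BST on key set `Icc a b`. -/
noncomputable def build (w : ℕ → ℝ) (a b : ℕ) : BTree :=
  if h : 1 ≤ a ∧ a ≤ b then
    .node (build w a (wsplit w a b - 1)) (wsplit w a b) (build w (wsplit w a b + 1) b)
  else .leaf
termination_by b + 1 - a
decreasing_by
  · have h1 := wsplit_ge w h.2
    have h2 := wsplit_le w a b
    omega
  · have h1 := wsplit_ge w h.2
    have h2 := wsplit_le w a b
    omega

lemma build_spec (w : ℕ → ℝ) (hw : ∀ i, 0 < w i) :
    ∀ N a b, b + 1 - a ≤ N → 1 ≤ a →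
    (build w a b).keys = Finset.Icc a b ∧ (build w a b).IsSearchTree ∧
    ∀ i ∈ Finset.Icc a b,
      (2:ℝ) ^ (build w a b).depth i * w i ≤ ∑ k ∈ Finset.Icc a b, w k := by
  intro N
  induction N with
  | zero =>
    intro a b hN ha
    have hba : b < a := by omega
    rw [build, dif_neg (by omega)]
    refine ⟨?_, trivial, ?_⟩
    · rw [Finset.Icc_eq_empty (by omega)]; rfl
    · intro i hi
      rw [Finset.mem_Icc] at hi; omega
  | succ N IH =>
    intro a b hN ha
    by_cases hab : a ≤ b
    · set r := wsplit w a b with hr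
      set W := ∑ k ∈ Finset.Icc a b, w k with hWdef
      have hW : 0 < W := Finset.sum_pos (fun i _ => hw i) ⟨a, Finset.mem_Icc.2 ⟨le_rfl, hab⟩⟩
      set Pset := {r | a ≤ r ∧ W / 2 < ∑ i ∈ Finset.Icc a r, w i} with hPset
      have hbmem : b ∈ Pset := ⟨hab, by rw [← hWdef]; linarith⟩
      have hsmem : sInf Pset ∈ Pset := Nat.sInf_mem ⟨b, hbmem⟩
      have hsleb : sInf Pset ≤ b := Nat.sInf_le hbmem
      have hreq : r = sInf Pset := by
        rw [hr, wsplit]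
        rw [max_eq_right hsmem.1, min_eq_right hsleb]
      have hra : a ≤ r := hreq ▸ hsmem.1
      have hrb : r ≤ b := hreq ▸ hsleb
      have hPr : W / 2 < ∑ i ∈ Finset.Icc a r, w i := hreq ▸ hsmem.2
      -- left sum small
      have hleft : ∑ i ∈ Finset.Icc a (r - 1), w i ≤ W / 2 := by
        rcases eq_or_lt_of_le hra with h | h
        · rw [Finset.Icc_eq_empty (by omega), Finset.sum_empty]; linarith
        · have hnot : r - 1 ∉ Pset := Nat.notMem_of_lt_sInf (by omega)
          rw [hPset, Set.mem_setOf_eq] at hnot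
          push_neg at hnot
          exact hnot (by omega)
      -- sum split
      have hsplitsum : W = (∑ i ∈ Finset.Icc a r, w i) + ∑ i ∈ Finset.Icc (r+1) b, w i := by
        rw [hWdef, show Finset.Icc a b = Finset.Icc a r ∪ Finset.Icc (r+1) b by
          ext i; simp only [Finset.mem_Icc, Finset.mem_union]; omega]
        exact Finset.sum_union (by
          rw [Finset.disjoint_left]
          intro i hi hi'
          rw [Finset.mem_Icc] at hi hi'; omega)
      have hright : ∑ i ∈ Finset.Icc (r+1) b, w i ≤ W / 2 := by linarith
      obtain ⟨kl, sl, dl⟩ := IH a (r - 1) (by omega) ha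
      obtain ⟨kr, sr, dr⟩ := IH (r + 1) b (by omega) (by omega)
      have hb : build w a b = .node (build w a (r-1)) r (build w (r+1) b) := by
        rw [build, dif_pos ⟨by omega, hab⟩]
      rw [hb]
      refine ⟨?_, ⟨?_, ?_, sl, sr⟩, ?_⟩
      · rw [BTree.keys, kl, kr]
        ext i
        simp only [Finset.mem_union, Finset.mem_Icc, Finset.mem_singleton]
        omega
      · intro y hy; rw [kl, Finset.mem_Icc] at hy; omega
      · intro y hy; rw [kr, Finset.mem_Icc] at hy; omega
      · intro i hi
        rw [Finset.mem_Icc] at hi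
        rcases lt_trichotomy i r with h | h | h
        · have hd : (BTree.node (build w a (r-1)) r (build w (r+1) b)).depth i
              = (build w a (r-1)).depth i + 1 := by
            rw [BTree.depth, if_neg (by omega), if_pos h]
          rw [hd, pow_succ]
          have := dl i (Finset.mem_Icc.2 ⟨hi.1, by omega⟩)
          have hp : (0:ℝ) < 2 ^ (build w a (r-1)).depth i * w i :=
            mul_pos (by positivity) (hw i)
          calc (2:ℝ) ^ (build w a (r-1)).depth i * 2 * w i
              = 2 * ((2:ℝ) ^ (build w a (r-1)).depth i * w i) := by ring
            _ ≤ 2 * ∑ k ∈ Finset.Icc a (r-1), w k := by linarith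
            _ ≤ W := by linarith
        · have hd : (BTree.node (build w a (r-1)) r (build w (r+1) b)).depth i = 0 := by
            rw [BTree.depth, if_pos h]
          rw [hd, pow_zero, one_mul]
          exact Finset.single_le_sum (fun k _ => (hw k).le)
            (Finset.mem_Icc.2 ⟨hi.1, hi.2⟩)
        · have hd : (BTree.node (build w a (r-1)) r (build w (r+1) b)).depth i
              = (build w (r+1) b).depth i + 1 := by
            rw [BTree.depth, if_neg (by omega), if_neg (by omega)]
          rw [hd, pow_succ]
          have := dr i (Finset.mem_Icc.2 ⟨by omega, hi.2⟩)
          calc (2:ℝ) ^ (build w (r+1) b).depth i * 2 * w i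
              = 2 * ((2:ℝ) ^ (build w (r+1) b).depth i * w i) := by ring
            _ ≤ 2 * ∑ k ∈ Finset.Icc (r+1) b, w k := by linarith
            _ ≤ W := by linarith
    · rw [build, dif_neg (by omega)]
      refine ⟨?_, trivial, ?_⟩
      · rw [Finset.Icc_eq_empty (by omega)]; rfl
      · intro i hi; rw [Finset.mem_Icc] at hi; omega

lemma tree_sum_le (T : BTree) (hT : T.IsSearchTree) :
    ∑ i ∈ T.keys, ((3:ℝ)⁻¹) ^ T.depth i ≤ 3 := by
  induction T with
  | leaf => norm_num [BTree.keys]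
  | node l x r ihl ihr =>
    obtain ⟨hl, hr, hsl, hsr⟩ := hT
    have d2 : Disjoint l.keys ({x} : Finset ℕ) := by
      rw [Finset.disjoint_singleton_right]
      intro hx; exact absurd (hl x hx) (lt_irrefl x)
    have d1 : Disjoint (l.keys ∪ {x}) r.keys := by
      rw [Finset.disjoint_left]
      intro y hy hyr
      have hxy := hr y hyr
      rcases Finset.mem_union.1 hy with h | h
      · exact absurd (hl y h) (by omega)
      · rw [Finset.mem_singleton] at h; omega
    have el : ∑ i ∈ l.keys, ((3:ℝ)⁻¹) ^ (BTree.node l x r).depth i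
        = 3⁻¹ * ∑ i ∈ l.keys, ((3:ℝ)⁻¹) ^ l.depth i := by
      rw [Finset.mul_sum]
      refine Finset.sum_congr rfl fun y hy => ?_
      have hyx := hl y hy
      rw [BTree.depth, if_neg (by omega), if_pos hyx, pow_succ]; ring
    have er : ∑ i ∈ r.keys, ((3:ℝ)⁻¹) ^ (BTree.node l x r).depth i
        = 3⁻¹ * ∑ i ∈ r.keys, ((3:ℝ)⁻¹) ^ r.depth i := by
      rw [Finset.mul_sum]
      refine Finset.sum_congr rfl fun y hy => ?_
      have hyx := hr y hy
      rw [BTree.depth, if_neg (by omega), if_neg (by omega), pow_succ]; ring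
    have ex : ((3:ℝ)⁻¹) ^ (BTree.node l x r).depth x = 1 := by
      rw [BTree.depth, if_pos rfl, pow_zero]
    have hl0 : (0:ℝ) ≤ ∑ i ∈ l.keys, ((3:ℝ)⁻¹) ^ l.depth i :=
      Finset.sum_nonneg fun i _ => by positivity
    have hr0 : (0:ℝ) ≤ ∑ i ∈ r.keys, ((3:ℝ)⁻¹) ^ r.depth i :=
      Finset.sum_nonneg fun i _ => by positivity
    rw [BTree.keys, Finset.sum_union d1, Finset.sum_union d2, Finset.sum_singleton,
      el, er, ex]
    have := ihl hsl
    have := ihr hsr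
    linarith


/-- There is an absolute constant `C > 0` such that for every `n ≥ 1` and every access
sequence `S ∈ {1,…,n}^m`, the weighted balance bound and the static optimality bound
agree up to constants: `WB(S) ≤ C·(SO(S) + m)` and `SO(S) ≤ C·(WB(S) + m)`. -/
theorem wb_eq_so : ∃ C : ℝ, 0 < C ∧ ∀ (n m : ℕ) (S : Fin m → ℕ),
    1 ≤ n → (∀ j, S j ∈ Finset.Icc 1 n) →
    WB n S ≤ C * (SO n S + m) ∧ SO n S ≤ C * (WB n S + m) := by
  refine ⟨2, by norm_num, fun n m S hn hS => ?_⟩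
  set WBset := {x : ℝ | ∃ w : ℕ → ℝ, (∀ i ∈ Finset.Icc 1 n, 0 < w i) ∧
    x = ∑ j, Real.logb 2 ((∑ i ∈ Finset.Icc 1 n, w i) / w (S j))} with hWBset
  set SOset := {x : ℝ | ∃ T : BTree, T.IsBSTOn n ∧ x = ∑ j, (BTree.depth T (S j) : ℝ)}
    with hSOset
  have hWBeq : WB n S = sInf WBset := rfl
  have hSOeq : SO n S = sInf SOset := rfl
  -- WB set nonempty
  have hWBne : WBset.Nonempty :=
    ⟨_, fun _ => 1, fun i _ => one_pos, rfl⟩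
  -- WB set lower-bounded by 0
  have hWBlb : ∀ x ∈ WBset, (0:ℝ) ≤ x := by
    rintro x ⟨w, hw, rfl⟩
    refine Finset.sum_nonneg fun j _ => Real.logb_nonneg (by norm_num) ?_
    rw [le_div_iff₀ (hw _ (hS j))]
    rw [one_mul]
    exact Finset.single_le_sum (fun i hi => (hw i hi).le) (hS j)
  have hWB0 : 0 ≤ WB n S := by rw [hWBeq]; exact le_csInf hWBne hWBlb
  -- SO set nonempty
  have hSOne : SOset.Nonempty := by
    obtain ⟨k, s, _⟩ := build_spec (fun _ => 1) (fun _ => one_pos) n 1 n (by omega) le_rfl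
    exact ⟨_, _, ⟨s, k⟩, rfl⟩
  have hSOlb : ∀ x ∈ SOset, (0:ℝ) ≤ x := by
    rintro x ⟨T, _, rfl⟩
    exact Finset.sum_nonneg fun j _ => Nat.cast_nonneg _
  -- Direction 1 : WB ≤ 2 (SO + m)
  have dir1 : WB n S ≤ 2 * (SO n S + m) := by
    have key : ∀ x ∈ SOset, WB n S ≤ 2 * (x + m) := by
      rintro x ⟨T, ⟨hsT, hkT⟩, rfl⟩
      set w : ℕ → ℝ := fun i => ((3:ℝ)⁻¹) ^ T.depth i with hwdef
      set W := ∑ i ∈ Finset.Icc 1 n, w i with hWdef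
      have hW3 : W ≤ 3 := by
        rw [hWdef, ← hkT]; exact tree_sum_le T hsT
      have hWpos : 0 < W :=
        Finset.sum_pos (fun i _ => by positivity) ⟨1, Finset.mem_Icc.2 ⟨le_rfl, hn⟩⟩
      have hmem : (∑ j, Real.logb 2 (W / w (S j))) ∈ WBset :=
        ⟨w, fun i _ => by positivity, rfl⟩
      have h1 : WB n S ≤ ∑ j, Real.logb 2 (W / w (S j)) := by
        rw [hWBeq]; exact csInf_le ⟨0, hWBlb⟩ hmem
      have h2 : ∀ j, Real.logb 2 (W / w (S j)) ≤ 2 * ((T.depth (S j) : ℝ) + 1) := by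
        intro j
        have hd : W / w (S j) = W * 3 ^ T.depth (S j) := by
          show W / ((3:ℝ)⁻¹) ^ T.depth (S j) = W * 3 ^ T.depth (S j)
          field_simp
          rw [← mul_pow]; norm_num
        have hle : W / w (S j) ≤ 3 ^ (T.depth (S j) + 1) := by
          rw [hd, pow_succ]
          calc W * 3 ^ T.depth (S j) ≤ 3 * 3 ^ T.depth (S j) := by
                have : (0:ℝ) ≤ 3 ^ T.depth (S j) := by positivity
                nlinarith
            _ = 3 ^ T.depth (S j) * 3 := by ring
        have hpos : 0 < W / w (S j) := by
          apply div_pos hWpos; positivity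
        have hlog3 : Real.logb 2 3 ≤ 2 := by
          have h34 : Real.logb 2 3 ≤ Real.logb 2 4 :=
            Real.logb_le_logb_of_le (by norm_num) (by norm_num) (by norm_num)
          have h4 : Real.logb 2 4 = 2 := by
            rw [show (4:ℝ) = 2^(2:ℕ) by norm_num, Real.logb_pow, Real.logb_self_eq_one]
              <;> norm_num
          linarith
        calc Real.logb 2 (W / w (S j)) ≤ Real.logb 2 (3 ^ (T.depth (S j) + 1)) :=
              Real.logb_le_logb_of_le (by norm_num) hpos hle
          _ = (T.depth (S j) + 1 : ℕ) * Real.logb 2 3 := by rw [Real.logb_pow]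
          _ ≤ (T.depth (S j) + 1 : ℕ) * 2 := by
              apply mul_le_mul_of_nonneg_left hlog3 (by positivity)
          _ = 2 * ((T.depth (S j) : ℝ) + 1) := by push_cast; ring
      calc WB n S ≤ ∑ j, Real.logb 2 (W / w (S j)) := h1
        _ ≤ ∑ j, 2 * ((T.depth (S j) : ℝ) + 1) := Finset.sum_le_sum fun j _ => h2 j
        _ = 2 * ((∑ j, (T.depth (S j) : ℝ)) + m) := by
            simp only [mul_add, mul_one, Finset.sum_add_distrib, Finset.sum_const,
              Finset.card_univ, Fintype.card_fin, nsmul_eq_mul, ← Finset.mul_sum]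
            ring
    have : WB n S / 2 - m ≤ SO n S := by
      rw [hSOeq]
      exact le_csInf hSOne fun x hx => by have := key x hx; linarith
    linarith
  -- Direction 2 : SO ≤ WB ≤ 2 (WB + m)
  have dir2 : SO n S ≤ WB n S := by
    rw [hWBeq]
    refine le_csInf hWBne ?_
    rintro x ⟨w, hwpos, rfl⟩
    set w' : ℕ → ℝ := fun i => if i ∈ Finset.Icc 1 n then w i else 1 with hw'def
    have hw' : ∀ i, 0 < w' i := by
      intro i; rw [hw'def]; dsimp only
      split
      · exact hwpos i ‹_›
      · exact one_pos
    obtain ⟨k, s, dbound⟩ := build_spec w' hw' n 1 n (by omega) le_rfl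
    set T := build w' 1 n with hT
    have hsum_eq : ∑ i ∈ Finset.Icc 1 n, w' i = ∑ i ∈ Finset.Icc 1 n, w i :=
      Finset.sum_congr rfl fun i hi => by rw [hw'def]; simp [hi]
    have hstep : ∀ j, (T.depth (S j) : ℝ) ≤
        Real.logb 2 ((∑ i ∈ Finset.Icc 1 n, w i) / w (S j)) := by
      intro j
      have hb := dbound (S j) (hS j)
      have hw'S : w' (S j) = w (S j) := by rw [hw'def]; simp [hS j]
      rw [hsum_eq, hw'S] at hb
      have h2 : (2:ℝ) ^ T.depth (S j) ≤ (∑ i ∈ Finset.Icc 1 n, w i) / w (S j) := by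
        rw [le_div_iff₀ (hwpos _ (hS j))]
        exact hb
      calc (T.depth (S j) : ℝ) = Real.logb 2 (2 ^ T.depth (S j)) := by
            rw [Real.logb_pow, Real.logb_self_eq_one] <;> norm_num
        _ ≤ _ := Real.logb_le_logb_of_le (by norm_num) (by positivity) h2
    have hSOle : SO n S ≤ ∑ j, (T.depth (S j) : ℝ) := by
      rw [hSOeq]
      exact csInf_le ⟨0, hSOlb⟩ ⟨T, ⟨s, k⟩, rfl⟩
    calc SO n S ≤ ∑ j, (T.depth (S j) : ℝ) := hSOle
      _ ≤ _ := Finset.sum_le_sum fun j _ => hstep j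
  exact ⟨dir1, by linarith⟩
end

section
/- For every n ≥ 1 and every access sequence S = (s_1,…,s_m) ∈ {1,…,n}^m, the weighted balance bound is dominated by the fixed finger bound: WB(S) ≤ 2·FF(S) + 2m. -/
namespace BTree

/-- Number of edges on the path between the keys `a` and `b` (for a search tree). -/
def dist : BTree → ℕ → ℕ → ℕ
  | leaf, _, _ => 0
  | node l x r, a, b =>
      if a < x ∧ b < x then dist l a b
      else if x < a ∧ x < b then dist r a b
      else depth (node l x r) a + depth (node l x r) b

lemma depth_node_left {l r : BTree} {x y : ℕ} (h : y < x) :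
    depth (node l x r) y = depth l y + 1 := by
  simp [depth, h.ne, h]

lemma depth_node_right {l r : BTree} {x y : ℕ} (h : x < y) :
    depth (node l x r) y = depth r y + 1 := by
  simp [depth, h.ne', Nat.lt_asymm h]

lemma depth_node_self {l r : BTree} {x : ℕ} : depth (node l x r) x = 0 := by
  simp [depth]

lemma sum_keys_node (l r : BTree) (x : ℕ) (hl : ∀ y ∈ keys l, y < x)
    (hr : ∀ y ∈ keys r, x < y) (g : ℕ → ℝ) :
    ∑ i ∈ keys (node l x r), g i = (∑ i ∈ keys l, g i) + g x + ∑ i ∈ keys r, g i := by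
  have d1 : Disjoint (keys l) ({x} : Finset ℕ) := by
    simp only [Finset.disjoint_singleton_right]
    intro h; exact lt_irrefl x (hl x h)
  have d2 : Disjoint (keys l ∪ {x}) (keys r) := by
    rw [Finset.disjoint_left]
    intro a ha har
    rcases Finset.mem_union.1 ha with h | h
    · exact absurd (hr a har) (Nat.lt_asymm (hl a h))
    · exact lt_irrefl a ((Finset.mem_singleton.1 h) ▸ hr a har)
  show ∑ i ∈ keys l ∪ {x} ∪ keys r, g i = _
  rw [Finset.sum_union d2, Finset.sum_union d1, Finset.sum_singleton]

lemma sum_depth_le (T : BTree) (hT : IsSearchTree T) :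
    ∑ i ∈ keys T, ((1:ℝ)/4) ^ (depth T i) ≤ 2 := by
  induction T with
  | leaf => simp [keys]
  | node l x r ihl ihr =>
    obtain ⟨hl, hr, hsl, hsr⟩ := hT
    rw [sum_keys_node l r x hl hr]
    have el : ∑ i ∈ keys l, ((1:ℝ)/4) ^ (depth (node l x r) i)
        = (∑ i ∈ keys l, ((1:ℝ)/4) ^ (depth l i)) * (1/4) := by
      rw [Finset.sum_mul]
      exact Finset.sum_congr rfl fun i hi => by
        rw [depth_node_left (hl i hi), pow_succ]
    have er : ∑ i ∈ keys r, ((1:ℝ)/4) ^ (depth (node l x r) i)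
        = (∑ i ∈ keys r, ((1:ℝ)/4) ^ (depth r i)) * (1/4) := by
      rw [Finset.sum_mul]
      exact Finset.sum_congr rfl fun i hi => by
        rw [depth_node_right (hr i hi), pow_succ]
    rw [el, er, depth_node_self]
    have h1 := ihl hsl
    have h2 := ihr hsr
    norm_num
    nlinarith

lemma sum_dist_le (T : BTree) (hT : IsSearchTree T) (f : ℕ) :
    ∑ i ∈ keys T, ((1:ℝ)/4) ^ (dist T f i)
      ≤ 4 - (1/2) * ((1:ℝ)/4) ^ (depth T f) := by
  induction T generalizing f with
  | leaf => simp [keys, depth]; norm_num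
  | node l x r ihl ihr =>
    obtain ⟨hl, hr, hsl, hsr⟩ := hT
    rw [sum_keys_node l r x hl hr]
    rcases lt_trichotomy f x with hfx | hfx | hfx
    · -- f < x
      have el : ∑ i ∈ keys l, ((1:ℝ)/4) ^ (dist (node l x r) f i)
          = ∑ i ∈ keys l, ((1:ℝ)/4) ^ (dist l f i) :=
        Finset.sum_congr rfl fun i hi => by
          simp [dist, hfx, hl i hi]
      have ex : dist (node l x r) f x = depth l f + 1 := by
        simp [dist, lt_irrefl, Nat.lt_asymm hfx, depth_node_left hfx, depth_node_self]
      have er : ∑ i ∈ keys r, ((1:ℝ)/4) ^ (dist (node l x r) f i)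
          = ∑ i ∈ keys r, ((1:ℝ)/4) ^ ((depth l f + 1) + (depth r i + 1)) :=
        Finset.sum_congr rfl fun i hi => by
          simp [dist, Nat.lt_asymm (hr i hi), Nat.lt_asymm hfx,
            depth_node_left hfx, depth_node_right (hr i hi)]
      rw [el, ex, er, depth_node_left hfx]
      have h1 := ihl hsl f
      have h2 := sum_depth_le r hsr
      set q : ℝ := ((1:ℝ)/4) ^ (depth l f) with hq
      have hq0 : (0:ℝ) ≤ q := by positivity
      have e2 : ∑ i ∈ keys r, ((1:ℝ)/4) ^ ((depth l f + 1) + (depth r i + 1))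
          = q * (1/16) * ∑ i ∈ keys r, ((1:ℝ)/4) ^ (depth r i) := by
        rw [Finset.mul_sum]
        exact Finset.sum_congr rfl fun i hi => by rw [pow_add, pow_add, pow_succ, pow_succ]; ring
      rw [e2, pow_succ]; rw [← hq]
      nlinarith [mul_le_mul_of_nonneg_left h2 (by positivity : (0:ℝ) ≤ q * (1/16))]
    · -- f = x
      subst hfx
      have el : ∑ i ∈ keys l, ((1:ℝ)/4) ^ (dist (node l f r) f i)
          = ∑ i ∈ keys l, ((1:ℝ)/4) ^ (depth l i + 1) :=
        Finset.sum_congr rfl fun i hi => by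
          simp [dist, lt_irrefl, depth_node_left (hl i hi), depth_node_self]
      have ex : dist (node l f r) f f = 0 := by
        simp [dist, lt_irrefl, depth_node_self]
      have er : ∑ i ∈ keys r, ((1:ℝ)/4) ^ (dist (node l f r) f i)
          = ∑ i ∈ keys r, ((1:ℝ)/4) ^ (depth r i + 1) :=
        Finset.sum_congr rfl fun i hi => by
          simp [dist, lt_irrefl, Nat.lt_asymm (hr i hi),
            depth_node_right (hr i hi), depth_node_self]
      rw [el, ex, er, depth_node_self]
      have h1 := sum_depth_le l hsl
      have h2 := sum_depth_le r hsr
      have e1 : ∑ i ∈ keys l, ((1:ℝ)/4) ^ (depth l i + 1)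
          = (∑ i ∈ keys l, ((1:ℝ)/4) ^ (depth l i)) * (1/4) := by
        rw [Finset.sum_mul]; exact Finset.sum_congr rfl fun i _ => by rw [pow_succ]
      have e2 : ∑ i ∈ keys r, ((1:ℝ)/4) ^ (depth r i + 1)
          = (∑ i ∈ keys r, ((1:ℝ)/4) ^ (depth r i)) * (1/4) := by
        rw [Finset.sum_mul]; exact Finset.sum_congr rfl fun i _ => by rw [pow_succ]
      rw [e1, e2]
      norm_num
      nlinarith
    · -- x < f
      have el : ∑ i ∈ keys l, ((1:ℝ)/4) ^ (dist (node l x r) f i)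
          = ∑ i ∈ keys l, ((1:ℝ)/4) ^ ((depth r f + 1) + (depth l i + 1)) :=
        Finset.sum_congr rfl fun i hi => by
          simp [dist, Nat.lt_asymm hfx, Nat.lt_asymm (hl i hi),
            depth_node_right hfx, depth_node_left (hl i hi)]
      have ex : dist (node l x r) f x = depth r f + 1 := by
        simp [dist, lt_irrefl, Nat.lt_asymm hfx, depth_node_right hfx, depth_node_self]
      have er : ∑ i ∈ keys r, ((1:ℝ)/4) ^ (dist (node l x r) f i)
          = ∑ i ∈ keys r, ((1:ℝ)/4) ^ (dist r f i) :=
        Finset.sum_congr rfl fun i hi => by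
          simp [dist, Nat.lt_asymm hfx, hfx, hr i hi]
      rw [el, ex, er, depth_node_right hfx]
      have h1 := ihr hsr f
      have h2 := sum_depth_le l hsl
      set q : ℝ := ((1:ℝ)/4) ^ (depth r f) with hq
      have hq0 : (0:ℝ) ≤ q := by positivity
      have e2 : ∑ i ∈ keys l, ((1:ℝ)/4) ^ ((depth r f + 1) + (depth l i + 1))
          = q * (1/16) * ∑ i ∈ keys l, ((1:ℝ)/4) ^ (depth l i) := by
        rw [Finset.mul_sum]
        exact Finset.sum_congr rfl fun i hi => by rw [pow_add, pow_add, pow_succ, pow_succ]; ring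
      rw [e2, pow_succ]; rw [← hq]
      nlinarith [mul_le_mul_of_nonneg_left h2 (by positivity : (0:ℝ) ≤ q * (1/16))]

def chain : ℕ → ℕ → BTree
  | _, 0 => leaf
  | lo, k+1 => node leaf lo (chain (lo+1) k)

lemma chain_keys (k : ℕ) : ∀ lo, keys (chain lo k) = Finset.Ico lo (lo + k) := by
  induction k with
  | zero => intro lo; simp [chain, keys]
  | succ k ih =>
    intro lo
    show keys leaf ∪ {lo} ∪ keys (chain (lo+1) k) = _
    rw [ih (lo+1)]
    ext a
    simp [keys, Finset.mem_Ico]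
    omega

lemma chain_search (k : ℕ) : ∀ lo, IsSearchTree (chain lo k) := by
  induction k with
  | zero => intro lo; trivial
  | succ k ih =>
    intro lo
    refine ⟨by simp [keys], ?_, trivial, ih (lo+1)⟩
    intro y hy
    rw [chain_keys] at hy
    exact lt_of_lt_of_le (Nat.lt_succ_self lo) (Finset.mem_Ico.1 hy).1

lemma logb_two_four : Real.logb 2 4 = 2 := by
  rw [show (4:ℝ) = 2^2 by norm_num, Real.logb_pow]
  simp [Real.logb_self_eq_one]

end BTree

/-- The fixed finger bound `FF(S)`: minimum over BSTs `T` on `{1,…,n}` and finger keys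
`f ∈ {1,…,n}` of `∑_j d_T(f, s_j)`. -/
noncomputable def FF (n : ℕ) {m : ℕ} (S : Fin m → ℕ) : ℝ :=
  sInf {x : ℝ | ∃ T : BTree, ∃ f ∈ Finset.Icc 1 n, T.IsBSTOn n ∧
    x = ∑ j, (BTree.dist T f (S j) : ℝ)}

/-- For every `n ≥ 1` and every access sequence `S ∈ {1,…,n}^m`, the weighted balance
bound is dominated by the fixed finger bound: `WB(S) ≤ 2·FF(S) + 2m`. -/
theorem wb_le_ff (n m : ℕ) (S : Fin m → ℕ) (hn : 1 ≤ n)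
    (hS : ∀ j, S j ∈ Finset.Icc 1 n) :
    WB n S ≤ 2 * FF n S + 2 * m := by
  have hA : {x : ℝ | ∃ T : BTree, ∃ f ∈ Finset.Icc 1 n, T.IsBSTOn n ∧
      x = ∑ j, (BTree.dist T f (S j) : ℝ)}.Nonempty := by
    refine ⟨∑ j, (BTree.dist (BTree.chain 1 n) 1 (S j) : ℝ), BTree.chain 1 n, 1, ?_,
      ⟨BTree.chain_search n 1, ?_⟩, rfl⟩
    · simp [hn]
    · rw [BTree.chain_keys]
      ext a
      simp [Finset.mem_Ico, Finset.mem_Icc]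
      omega
  have hBdd : BddBelow {x : ℝ | ∃ w : ℕ → ℝ, (∀ i ∈ Finset.Icc 1 n, 0 < w i) ∧
      x = ∑ j, Real.logb 2 ((∑ i ∈ Finset.Icc 1 n, w i) / w (S j))} := by
    refine ⟨0, ?_⟩
    rintro y ⟨w, hw, rfl⟩
    apply Finset.sum_nonneg
    intro j _
    apply Real.logb_nonneg one_lt_two
    rw [le_div_iff₀ (hw _ (hS j)), one_mul]
    exact Finset.single_le_sum (fun i hi => (hw i hi).le) (hS j)
  have key : ∀ x ∈ {x : ℝ | ∃ T : BTree, ∃ f ∈ Finset.Icc 1 n, T.IsBSTOn n ∧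
      x = ∑ j, (BTree.dist T f (S j) : ℝ)}, WB n S ≤ 2 * x + 2 * m := by
    rintro x ⟨T, f, hf, ⟨hsT, hkT⟩, rfl⟩
    set w : ℕ → ℝ := fun i => ((1:ℝ)/4) ^ (BTree.dist T f i) with hwdef
    have hwpos : ∀ i, 0 < w i := fun i => by positivity
    set W : ℝ := ∑ i ∈ Finset.Icc 1 n, w i with hWdef
    have hWpos : 0 < W := Finset.sum_pos (fun i _ => hwpos i) ⟨1, by simp [hn]⟩
    have hW4 : W ≤ 4 := by
      have h := BTree.sum_dist_le T hsT f
      rw [hkT] at h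
      have hq : (0:ℝ) ≤ ((1:ℝ)/4) ^ (BTree.depth T f) := by positivity
      calc W = ∑ i ∈ Finset.Icc 1 n, ((1:ℝ)/4) ^ (BTree.dist T f i) := rfl
        _ ≤ 4 - (1/2) * ((1:ℝ)/4) ^ (BTree.depth T f) := h
        _ ≤ 4 := by linarith
    have hmem : (∑ j, Real.logb 2 (W / w (S j))) ∈ {x : ℝ | ∃ w : ℕ → ℝ,
        (∀ i ∈ Finset.Icc 1 n, 0 < w i) ∧
        x = ∑ j, Real.logb 2 ((∑ i ∈ Finset.Icc 1 n, w i) / w (S j))} :=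
      ⟨w, fun i _ => hwpos i, rfl⟩
    have h1 : WB n S ≤ ∑ j, Real.logb 2 (W / w (S j)) := csInf_le hBdd hmem
    have hlogW : Real.logb 2 W ≤ 2 := by
      calc Real.logb 2 W ≤ Real.logb 2 4 := by gcongr; norm_num
        _ = 2 := BTree.logb_two_four
    have hterm : ∀ j, Real.logb 2 (W / w (S j)) ≤ 2 + 2 * (BTree.dist T f (S j) : ℝ) := by
      intro j
      rw [Real.logb_div hWpos.ne' (hwpos (S j)).ne']
      have e : Real.logb 2 (w (S j)) = -(2 * (BTree.dist T f (S j) : ℝ)) := by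
        show Real.logb 2 (((1:ℝ)/4) ^ _) = _
        rw [Real.logb_pow, show ((1:ℝ)/4) = (4:ℝ)⁻¹ by norm_num, Real.logb_inv,
          BTree.logb_two_four]
        ring
      rw [e]
      linarith
    have h2 : ∑ j, Real.logb 2 (W / w (S j))
        ≤ 2 * (∑ j, (BTree.dist T f (S j) : ℝ)) + 2 * m := by
      calc ∑ j, Real.logb 2 (W / w (S j))
          ≤ ∑ j : Fin m, (2 + 2 * (BTree.dist T f (S j) : ℝ)) :=
            Finset.sum_le_sum fun j _ => hterm j
        _ = 2 * (∑ j, (BTree.dist T f (S j) : ℝ)) + 2 * m := by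
            rw [Finset.sum_add_distrib, Finset.sum_const, Finset.mul_sum]
            simp [mul_comm]
            ring
    linarith
  have hlb : (WB n S - 2 * m) / 2 ≤ FF n S := by
    apply le_csInf hA
    intro x hx
    have := key x hx
    linarith
  linarith
end

section
/- Let T be a BST on the key set {1,…,n} and define the weight function w(i) = 4^{−d_T(i)} for all i ∈ {1,…,n}. Then for every key i, w(i) ≤ ∑_{j ∈ T(i)} w(j) ≤ 2·w(i), where T(i) denotes the set of keys in the subtree of T rooted at i. -/
namespace BTree

/-- The subtree of `T` rooted at the key `y` (via the search path); `leaf` if absent. -/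
def subtreeAt : BTree → ℕ → BTree
  | leaf, _ => leaf
  | node l x r, y =>
      if y = x then node l x r
      else if y < x then subtreeAt l y
      else subtreeAt r y

end BTree

namespace BTree

lemma keys_subtreeAt_subset (T : BTree) (i : ℕ) : (subtreeAt T i).keys ⊆ T.keys := by
  induction T with
  | leaf => simp [subtreeAt]
  | node l x r ihl ihr =>
    simp only [subtreeAt]
    split
    · exact Finset.Subset.refl _
    · split
      · exact ihl.trans (fun a ha => by
          simp only [keys, Finset.mem_union]; exact Or.inl (Or.inl ha))
      · exact ihr.trans (fun a ha => by
          simp only [keys, Finset.mem_union]; exact Or.inr ha)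

lemma isSearchTree_subtreeAt {T : BTree} (h : T.IsSearchTree) (i : ℕ) :
    (subtreeAt T i).IsSearchTree := by
  induction T with
  | leaf => exact trivial
  | node l x r ihl ihr =>
    obtain ⟨h1, h2, h3, h4⟩ := h
    simp only [subtreeAt]
    split
    · exact ⟨h1, h2, h3, h4⟩
    · split
      · exact ihl h3
      · exact ihr h4

lemma subtreeAt_root {T : BTree} (h : T.IsSearchTree) {i : ℕ} (hi : i ∈ T.keys) :
    ∃ l r, subtreeAt T i = BTree.node l i r := by
  induction T with
  | leaf => simp [keys] at hi
  | node l x r ihl ihr =>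
    obtain ⟨h1, h2, h3, h4⟩ := h
    simp only [keys, Finset.mem_union, Finset.mem_singleton] at hi
    simp only [subtreeAt]
    by_cases hx : i = x
    · subst hx; simp
    · simp only [hx, if_false]
      by_cases hlt : i < x
      · simp only [hlt, if_true]
        rcases hi with (hi | hi) | hi
        · exact ihl h3 hi
        · exact absurd hi hx
        · exact absurd (h2 i hi) (by omega)
      · simp only [hlt, if_false]
        rcases hi with (hi | hi) | hi
        · exact absurd (h1 i hi) (by omega)
        · exact absurd hi hx
        · exact ihr h4 hi

lemma depth_subtreeAt {T : BTree} (h : T.IsSearchTree) {i : ℕ} (hi : i ∈ T.keys) :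
    ∀ j ∈ (subtreeAt T i).keys,
      depth T j = depth T i + depth (subtreeAt T i) j := by
  induction T with
  | leaf => simp [keys] at hi
  | node l x r ihl ihr =>
    obtain ⟨h1, h2, h3, h4⟩ := h
    simp only [keys, Finset.mem_union, Finset.mem_singleton] at hi
    intro j hj
    by_cases hx : i = x
    · subst hx
      simp only [subtreeAt, if_pos rfl] at hj ⊢
      simp [depth]
    · by_cases hlt : i < x
      · have hil : i ∈ l.keys := by
          rcases hi with (hi | hi) | hi
          · exact hi
          · exact absurd hi hx
          · exact absurd (h2 i hi) (by omega)
        simp only [subtreeAt, hx, if_false, hlt, if_true] at hj ⊢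
        have hjl : j ∈ l.keys := keys_subtreeAt_subset l i hj
        have hjx : j < x := h1 j hjl
        simp only [depth, hx, if_false, hlt, if_true, if_neg (by omega : ¬ j = x),
          if_pos hjx]
        have := ihl h3 hil j hj
        omega
      · have hir : i ∈ r.keys := by
          rcases hi with (hi | hi) | hi
          · exact absurd (h1 i hi) (by omega)
          · exact absurd hi hx
          · exact hi
        have hxi : x < i := lt_of_le_of_ne (by omega) (Ne.symm hx)
        simp only [subtreeAt, hx, if_false, hlt, if_false] at hj ⊢
        have hjr : j ∈ r.keys := keys_subtreeAt_subset r i hj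
        have hjx : x < j := h2 j hjr
        simp only [depth, if_neg (by omega : ¬ j = x), if_neg (by omega : ¬ j < x),
          if_neg hx, if_neg hlt]
        have := ihr h4 hir j hj
        omega

lemma sum_weight_le_two {T : BTree} (h : T.IsSearchTree) :
    (∑ j ∈ T.keys, (4 : ℝ) ^ (-(depth T j : ℤ))) ≤ 2 := by
  induction T with
  | leaf => simp [keys]
  | node l x r ihl ihr =>
    obtain ⟨h1, h2, h3, h4⟩ := h
    have hdlr : Disjoint (l.keys ∪ {x}) r.keys := by
      rw [Finset.disjoint_left]
      intro a ha har
      have := h2 a har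
      simp only [Finset.mem_union, Finset.mem_singleton] at ha
      rcases ha with ha | ha
      · exact absurd (h1 a ha) (by omega)
      · omega
    have hdl : Disjoint l.keys ({x} : Finset ℕ) := by
      rw [Finset.disjoint_left]
      intro a ha hax
      simp only [Finset.mem_singleton] at hax
      exact absurd (h1 a ha) (by omega)
    simp only [keys, Finset.sum_union hdlr, Finset.sum_union hdl,
      Finset.sum_singleton]
    have hel : ∀ j ∈ l.keys, (4 : ℝ) ^ (-(depth (node l x r) j : ℤ)) =
        (4 : ℝ) ^ (-(depth l j : ℤ)) * (4 : ℝ)⁻¹ := by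
      intro j hj
      have hjx := h1 j hj
      simp only [depth, if_neg (by omega : ¬ j = x), if_pos hjx]
      push_cast
      rw [neg_add, zpow_add₀ (by norm_num : (4:ℝ) ≠ 0)]
      norm_num
    have her : ∀ j ∈ r.keys, (4 : ℝ) ^ (-(depth (node l x r) j : ℤ)) =
        (4 : ℝ) ^ (-(depth r j : ℤ)) * (4 : ℝ)⁻¹ := by
      intro j hj
      have hjx := h2 j hj
      simp only [depth, if_neg (by omega : ¬ j = x), if_neg (by omega : ¬ j < x)]
      push_cast
      rw [neg_add, zpow_add₀ (by norm_num : (4:ℝ) ≠ 0)]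
      norm_num
    rw [Finset.sum_congr rfl hel, Finset.sum_congr rfl her,
      ← Finset.sum_mul, ← Finset.sum_mul]
    have hrx : depth (node l x r) x = 0 := by simp [depth]
    rw [hrx]
    have hl2 := ihl h3
    have hr2 := ihr h4
    have hlnn : (0:ℝ) ≤ ∑ j ∈ l.keys, (4 : ℝ) ^ (-(depth l j : ℤ)) :=
      Finset.sum_nonneg fun j _ => zpow_nonneg (by norm_num) _
    have hrnn : (0:ℝ) ≤ ∑ j ∈ r.keys, (4 : ℝ) ^ (-(depth r j : ℤ)) :=
      Finset.sum_nonneg fun j _ => zpow_nonneg (by norm_num) _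
    simp only [Nat.cast_zero, neg_zero, zpow_zero]
    nlinarith

end BTree

/-- Let `T` be a BST on `{1,…,n}` and `w(i) = 4^{-d_T(i)}`.  Then for every key `i`,
`w(i) ≤ ∑_{j ∈ T(i)} w(j) ≤ 2·w(i)`, where `T(i)` is the set of keys of the subtree
of `T` rooted at `i`. -/
theorem subtree_weight_bound (n : ℕ) (T : BTree) (hT : T.IsBSTOn n)
    (i : ℕ) (hi : i ∈ Finset.Icc 1 n) :
    (4 : ℝ) ^ (-(BTree.depth T i : ℤ)) ≤
        (∑ j ∈ (BTree.subtreeAt T i).keys, (4 : ℝ) ^ (-(BTree.depth T j : ℤ))) ∧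
      (∑ j ∈ (BTree.subtreeAt T i).keys, (4 : ℝ) ^ (-(BTree.depth T j : ℤ))) ≤
        2 * (4 : ℝ) ^ (-(BTree.depth T i : ℤ)) := by
  obtain ⟨hst, hkeys⟩ := hT
  rw [← hkeys] at hi
  have hS : (BTree.subtreeAt T i).IsSearchTree := BTree.isSearchTree_subtreeAt hst i
  obtain ⟨l, r, hlr⟩ := BTree.subtreeAt_root hst hi
  have himem : i ∈ (BTree.subtreeAt T i).keys := by
    rw [hlr]; simp [BTree.keys]
  constructor
  · exact Finset.single_le_sum (f := fun j => (4:ℝ) ^ (-(BTree.depth T j : ℤ)))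
      (fun j _ => zpow_nonneg (by norm_num : (0:ℝ) ≤ 4) _) himem
  · have hdep := BTree.depth_subtreeAt hst hi
    calc (∑ j ∈ (BTree.subtreeAt T i).keys, (4 : ℝ) ^ (-(BTree.depth T j : ℤ)))
        = ∑ j ∈ (BTree.subtreeAt T i).keys,
            (4 : ℝ) ^ (-(BTree.depth T i : ℤ)) *
              (4 : ℝ) ^ (-(BTree.depth (BTree.subtreeAt T i) j : ℤ)) := by
          refine Finset.sum_congr rfl fun j hj => ?_
          rw [← zpow_add₀ (by norm_num : (4:ℝ) ≠ 0), hdep j hj]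
          push_cast
          ring_nf
      _ = (4 : ℝ) ^ (-(BTree.depth T i : ℤ)) *
            ∑ j ∈ (BTree.subtreeAt T i).keys,
              (4 : ℝ) ^ (-(BTree.depth (BTree.subtreeAt T i) j : ℤ)) := by
          rw [Finset.mul_sum]
      _ ≤ (4 : ℝ) ^ (-(BTree.depth T i : ℤ)) * 2 := by
          exact mul_le_mul_of_nonneg_left (BTree.sum_weight_le_two hS)
            (zpow_nonneg (by norm_num) _)
      _ = 2 * (4 : ℝ) ^ (-(BTree.depth T i : ℤ)) := by ring
end
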